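/- Let F be a field of characteristic 5. In the algebra B = Q₂(1/3)^× ⊕ ⟨𝟙⟩, with w := 𝟙 − z: w is an idempotent; w·x = −2x − y − 2z; the (nonunital) subalgebra of B generated by {w, x} is all of B; one has w·z = 0, w·(x + y + 3z) = (1/3)(x + y + 3z) and w·(x − y) = (2/3)(x − y); and the linear map fixing w, z and x + y + 3z and negating x − y is an algebra automorphism of B which maps x to y. (It is the Miyamoto involution of the axis w, exhibiting the skew axet X'(1+2).) -/
import Mathlib


/-- The multiplication of the algebra `B = Q₂(1/3)^× ⊕ ⟨𝟙⟩` (characteristic 5) in the basis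
`x = e 0`, `y = e 1`, `z = e 2`, `𝟙 = e 3`. -/
def mulB {F : Type*} [Field F] (u v : Fin 4 → F) : Fin 4 → F :=
  ![u 0 * v 0 + (u 0*v 3 + u 3*v 0) + 3 * (u 0*v 2 + u 2*v 0) + (u 1*v 2 + u 2*v 1),
    u 1 * v 1 + (u 1*v 3 + u 3*v 1) + (u 0*v 2 + u 2*v 0) + 3 * (u 1*v 2 + u 2*v 1),
    u 2 * v 2 + (u 2*v 3 + u 3*v 2) + 2 * (u 0*v 2 + u 2*v 0) + 2 * (u 1*v 2 + u 2*v 1),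
    u 3 * v 3]

/-- The swap `x ↔ y` as a linear map: the Miyamoto involution of `w`. -/
def tauB {F : Type*} [Field F] : (Fin 4 → F) →ₗ[F] (Fin 4 → F) where
  toFun u := ![u 1, u 0, u 2, u 3]
  map_add' u v := by funext i; fin_cases i <;> simp
  map_smul' c u := by funext i; fin_cases i <;> simp

/-- **The skew axis `w` of `B = Q₂(1/3)^× ⊕ ⟨𝟙⟩` in characteristic 5.**
Let `F` be a field of characteristic 5.  In the algebra `B` (realized on `Fin 4 → F`
with multiplication `mulB` and basis `x, y, z, 𝟙`), with `w := 𝟙 - z`:  `w` is an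
idempotent; `w·x = -2x - y - 2z`; the (nonunital) subalgebra generated by `{w, x}` is
all of `B`; `w·z = 0`, `w·(x+y+3z) = (1/3)(x+y+3z)` and `w·(x-y) = (2/3)(x-y)`; and the
linear map fixing `w`, `z`, `x+y+3z` and negating `x-y` is an algebra automorphism of
`B` mapping `x` to `y` (the Miyamoto involution of `w`, exhibiting the skew axet
`X'(1+2)`). -/
theorem B_skew_axis
    {F : Type*} [Field F] (h5 : (5 : F) = 0)
    (x y z one w : Fin 4 → F)
    (hx : x = ![1, 0, 0, 0]) (hy : y = ![0, 1, 0, 0]) (hz : z = ![0, 0, 1, 0])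
    (hone : one = ![0, 0, 0, 1]) (hw : w = one - z) :
    mulB w w = w ∧
    mulB w x = -(2 : F) • x - y - (2 : F) • z ∧
    (∀ S : Submodule F (Fin 4 → F), w ∈ S → x ∈ S →
      (∀ u v : Fin 4 → F, u ∈ S → v ∈ S → mulB u v ∈ S) → S = ⊤) ∧
    mulB w z = 0 ∧
    mulB w (x + y + (3 : F) • z) = (1 / 3 : F) • (x + y + (3 : F) • z) ∧
    mulB w (x - y) = (2 / 3 : F) • (x - y) ∧
    ∃ τ : (Fin 4 → F) →ₗ[F] (Fin 4 → F),
      τ w = w ∧ τ z = z ∧ τ (x + y + (3 : F) • z) = x + y + (3 : F) • z ∧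
      τ (x - y) = -(x - y) ∧
      (∀ u v : Fin 4 → F, τ (mulB u v) = mulB (τ u) (τ v)) ∧
      τ x = y := by
  subst hx hy hz hone hw
  refine ⟨?_, ?_, ?_, ?_, ?_, ?_, tauB, ?_, ?_, ?_, ?_, ?_, ?_⟩
  · funext i; fin_cases i <;> simp [mulB] <;> ring
  · funext i; fin_cases i <;> simp [mulB] <;> ring
  · intro S hwS hxS hmul
    have hp : (![0,1,2,0] : Fin 4 → F) ∈ S := by
      have he : (![0,1,2,0] : Fin 4 → F)
          = -(mulB (![0,0,0,1] - ![0,0,1,0]) ![1,0,0,0]) - (2:F) • ![1,0,0,0] := by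
        funext i; fin_cases i <;> simp [mulB] <;> ring
      rw [he]
      exact S.sub_mem (S.neg_mem (hmul _ _ hwS hxS)) (S.smul_mem _ hxS)
    have hq : (![4,13,12,0] : Fin 4 → F) ∈ S := by
      have he : (![4,13,12,0] : Fin 4 → F) = mulB ![0,1,2,0] ![0,1,2,0] := by
        funext i; fin_cases i <;> simp [mulB] <;> ring
      rw [he]; exact hmul _ _ hp hp
    have hyS : (![0,1,0,0] : Fin 4 → F) ∈ S := by
      have he : (![0,1,0,0] : Fin 4 → F)
          = (3:F) • ![4,13,12,0] + (2:F) • ![0,1,2,0] - (12:F) • ![1,0,0,0] := by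
        funext i; fin_cases i <;> simp <;>
          first | ring1 | linear_combination (8:F) * h5 | linear_combination (-8:F) * h5
      rw [he]
      exact S.sub_mem (S.add_mem (S.smul_mem _ hq) (S.smul_mem _ hp)) (S.smul_mem _ hxS)
    have hzS : (![0,0,1,0] : Fin 4 → F) ∈ S := by
      have he : (![0,0,1,0] : Fin 4 → F)
          = (3:F) • ![0,1,2,0] - (3:F) • ![0,1,0,0] := by
        funext i; fin_cases i <;> simp <;>
          first | ring1 | linear_combination h5 | linear_combination -h5
      rw [he]
      exact S.sub_mem (S.smul_mem _ hp) (S.smul_mem _ hyS)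
    have honeS : (![0,0,0,1] : Fin 4 → F) ∈ S := by
      have he : (![0,0,0,1] : Fin 4 → F) = (![0,0,0,1] - ![0,0,1,0]) + ![0,0,1,0] := by
        funext i; fin_cases i <;> simp
      rw [he]; exact S.add_mem hwS hzS
    rw [eq_top_iff]
    intro u _
    have he : u = u 0 • ![1,0,0,0] + u 1 • ![0,1,0,0] + u 2 • ![0,0,1,0]
        + u 3 • ![0,0,0,1] := by
      funext i; fin_cases i <;> simp
    rw [he]
    exact S.add_mem (S.add_mem (S.add_mem (S.smul_mem _ hxS) (S.smul_mem _ hyS))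
      (S.smul_mem _ hzS)) (S.smul_mem _ honeS)
  · funext i; fin_cases i <;> simp [mulB] <;> ring
  · have h3 : (3:F) ≠ 0 := fun h => one_ne_zero (by linear_combination (2:F)*h5 - (3:F)*h)
    have hinv : (3:F)⁻¹ = -3 :=
      inv_eq_of_mul_eq_one_right (by linear_combination (-2:F)*h5)
    funext i; fin_cases i <;> simp [mulB, hinv, div_eq_mul_inv] <;>
      first | ring1 | linear_combination h5 | linear_combination -h5 |
        linear_combination (2:F)*h5 | linear_combination (-2:F)*h5
  · have hinv : (3:F)⁻¹ = -3 :=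
      inv_eq_of_mul_eq_one_right (by linear_combination (-2:F)*h5)
    funext i; fin_cases i <;> simp [mulB, hinv, div_eq_mul_inv] <;>
      first | ring1 | linear_combination h5 | linear_combination -h5 |
        linear_combination (2:F)*h5 | linear_combination (-2:F)*h5
  · funext i; fin_cases i <;> simp [tauB]
  · funext i; fin_cases i <;> simp [tauB]
  · funext i; fin_cases i <;> simp [tauB]
  · funext i; fin_cases i <;> simp [tauB]
  · intro u v; funext i; fin_cases i <;> simp [tauB, mulB] <;> ring
  · funext i; fin_cases i <;> simp [tauB]
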